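/- arXiv:2405.11654 — 17 statements merged into one kernel-verified Lean document; each statement's English description precedes it below -/
import Mathlib

section
/- Soundness and completeness of the logic S: for every formula φ of the language Fm_S, φ is derivable in the Hilbert system S if and only if φ is S-valid, i.e., true at every world of every S-model. -/
/-- Formulas of the language `Fm_S`, generated from propositional variables in `Var`
and agents in `Ag` by negation, conjunction, and the modalities `I_a`, `K_a`, `B_a`. -/
inductive Fm (Var Ag : Type) : Type
  | var : Var → Fm Var Ag
  | neg : Fm Var Ag → Fm Var Ag
  | and : Fm Var Ag → Fm Var Ag → Fm Var Ag
  | int : Ag → Fm Var Ag → Fm Var Ag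
  | kn : Ag → Fm Var Ag → Fm Var Ag
  | bel : Ag → Fm Var Ag → Fm Var Ag

namespace Fm

variable {Var Ag : Type}

/-- Disjunction: `φ ∨ ψ := ¬(¬φ ∧ ¬ψ)`. -/
def or (φ ψ : Fm Var Ag) : Fm Var Ag := neg (and (neg φ) (neg ψ))

/-- Implication: `φ → ψ := ¬φ ∨ ψ`. -/
def impl (φ ψ : Fm Var Ag) : Fm Var Ag := or (neg φ) ψ

/-- `φ` is a classical propositional tautology: every Boolean valuation of formulas
commuting with negation and conjunction makes `φ` true (modal subformulas are
treated as atoms). -/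
def Taut (φ : Fm Var Ag) : Prop :=
  ∀ v : Fm Var Ag → Bool,
    (∀ ψ, v (neg ψ) = !(v ψ)) →
    (∀ ψ χ, v (and ψ χ) = (v ψ && v χ)) →
    v φ = true

end Fm

/-- Derivability in the Hilbert system `S`. -/
inductive Deriv {Var Ag : Type} : Fm Var Ag → Prop
  | taut {φ : Fm Var Ag} : φ.Taut → Deriv φ
  | a2K {a : Ag} {φ ψ : Fm Var Ag} :
      Deriv (((φ.impl ψ).kn a).impl ((φ.kn a).impl (ψ.kn a)))
  | a2B {a : Ag} {φ ψ : Fm Var Ag} :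
      Deriv (((φ.impl ψ).bel a).impl ((φ.bel a).impl (ψ.bel a)))
  | a2I {a : Ag} {φ ψ : Fm Var Ag} :
      Deriv (((φ.impl ψ).int a).impl ((φ.int a).impl (ψ.int a)))
  | a3 {a : Ag} {φ : Fm Var Ag} : Deriv ((φ.kn a).impl φ)
  | a4 {a : Ag} {φ : Fm Var Ag} : Deriv ((φ.kn a).impl ((φ.kn a).kn a))
  | a5 {a : Ag} {φ : Fm Var Ag} : Deriv ((φ.bel a).impl (φ.neg.bel a).neg)
  | a6 {a : Ag} {φ : Fm Var Ag} : Deriv ((φ.kn a).impl (φ.bel a))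
  | a7 {a : Ag} {φ : Fm Var Ag} : Deriv ((φ.bel a).impl ((φ.bel a).kn a))
  | a8 {a : Ag} {φ : Fm Var Ag} : Deriv ((φ.int a).impl (φ.neg.int a).neg)
  | a9 {a : Ag} {φ : Fm Var Ag} : Deriv ((φ.int a).impl ((φ.int a).kn a))
  | a10 {a : Ag} {φ : Fm Var Ag} : Deriv ((φ.int a).impl ((φ.kn a).int a))
  | a11 {a : Ag} {φ : Fm Var Ag} : Deriv ((φ.int a).impl ((φ.int a).int a))
  | mp {φ ψ : Fm Var Ag} : Deriv φ → Deriv (φ.impl ψ) → Deriv ψ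
  | necK {a : Ag} {φ : Fm Var Ag} : Deriv φ → Deriv (φ.kn a)
  | necB {a : Ag} {φ : Fm Var Ag} : Deriv φ → Deriv (φ.bel a)
  | necI {a : Ag} {φ : Fm Var Ag} : Deriv φ → Deriv (φ.int a)

/-- An `S`-model: a set of worlds with accessibility relations for each agent
satisfying the S-frame conditions, together with a valuation. -/
structure SKripkeModel (Var Ag : Type) where
  W : Type
  RI : Ag → W → W → Prop
  RK : Ag → W → W → Prop
  RB : Ag → W → W → Prop
  RB_serial : ∀ a i, ∃ j, RB a i j
  RI_serial : ∀ a i, ∃ j, RI a i j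
  RI_trans : ∀ a ⦃i j k⦄, RI a i j → RI a j k → RI a i k
  RK_refl : ∀ a i, RK a i i
  RK_trans : ∀ a ⦃i j k⦄, RK a i j → RK a j k → RK a i k
  RK_RI : ∀ a ⦃i j w⦄, RK a i j → RI a j w → RI a i w
  RB_sub_RK : ∀ a ⦃i j⦄, RB a i j → RK a i j
  RK_RB : ∀ a ⦃i j w⦄, RK a i j → RB a j w → RB a i w
  RI_RK : ∀ a ⦃i j w⦄, RI a i j → RK a j w → RI a i w
  val : Var → Set W

/-- Truth of a formula at a world of an `S`-model. -/
def Truth {Var Ag : Type} (M : SKripkeModel Var Ag) : M.W → Fm Var Ag → Prop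
  | i, .var p => i ∈ M.val p
  | i, .neg φ => ¬ Truth M i φ
  | i, .and φ ψ => Truth M i φ ∧ Truth M i ψ
  | i, .int a φ => ∀ j, M.RI a i j → Truth M j φ
  | i, .kn a φ => ∀ j, M.RK a i j → Truth M j φ
  | i, .bel a φ => ∀ j, M.RB a i j → Truth M j φ

/-- `S`-validity: truth at every world of every `S`-model. -/
def SValid {Var Ag : Type} (φ : Fm Var Ag) : Prop :=
  ∀ (M : SKripkeModel Var Ag) (i : M.W), Truth M i φ

namespace SProof

variable {Var Ag : Type}

/-! ### Soundness -/

lemma truth_impl (M : SKripkeModel Var Ag) (i : M.W) (φ ψ : Fm Var Ag) :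
    Truth M i (φ.impl ψ) ↔ (Truth M i φ → Truth M i ψ) := by
  simp only [Fm.impl, Fm.or, Truth]
  tauto

theorem soundness {φ : Fm Var Ag} (h : Deriv φ) : SValid φ := by
  induction h with
  | taut ht =>
    intro M i
    classical
    have h := ht (fun ψ => decide (Truth M i ψ)) ?_ ?_
    · exact of_decide_eq_true h
    · intro ψ; simp only [Truth]; by_cases h1 : Truth M i ψ <;> simp [h1]
    · intro ψ χ; simp only [Truth]; by_cases h1 : Truth M i ψ <;> by_cases h2 : Truth M i χ <;> simp [h1, h2]
  | @a2K a φ ψ =>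
    intro M i
    rw [truth_impl, truth_impl]
    intro h1 h2 j hj
    exact (truth_impl M j φ ψ).mp (h1 j hj) (h2 j hj)
  | @a2B a φ ψ =>
    intro M i
    rw [truth_impl, truth_impl]
    intro h1 h2 j hj
    exact (truth_impl M j φ ψ).mp (h1 j hj) (h2 j hj)
  | @a2I a φ ψ =>
    intro M i
    rw [truth_impl, truth_impl]
    intro h1 h2 j hj
    exact (truth_impl M j φ ψ).mp (h1 j hj) (h2 j hj)
  | @a3 a φ =>
    intro M i; rw [truth_impl]; intro h; exact h i (M.RK_refl a i)
  | @a4 a φ =>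
    intro M i; rw [truth_impl]; intro h j hj k hk
    exact h k (M.RK_trans a hj hk)
  | @a5 a φ =>
    intro M i; rw [truth_impl]; intro h hc
    obtain ⟨j, hj⟩ := M.RB_serial a i
    exact hc j hj (h j hj)
  | @a6 a φ =>
    intro M i; rw [truth_impl]; intro h j hj
    exact h j (M.RB_sub_RK a hj)
  | @a7 a φ =>
    intro M i; rw [truth_impl]; intro h j hj k hk
    exact h k (M.RK_RB a hj hk)
  | @a8 a φ =>
    intro M i; rw [truth_impl]; intro h hc
    obtain ⟨j, hj⟩ := M.RI_serial a i
    exact hc j hj (h j hj)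
  | @a9 a φ =>
    intro M i; rw [truth_impl]; intro h j hj k hk
    exact h k (M.RK_RI a hj hk)
  | @a10 a φ =>
    intro M i; rw [truth_impl]; intro h j hj k hk
    exact h k (M.RI_RK a hj hk)
  | @a11 a φ =>
    intro M i; rw [truth_impl]; intro h j hj k hk
    exact h k (M.RI_trans a hj hk)
  | mp h1 h2 ih1 ih2 =>
    intro M i; exact (truth_impl M i _ _).mp (ih2 M i) (ih1 M i)
  | necK h ih => intro M i j _; exact ih M j
  | necB h ih => intro M i j _; exact ih M j
  | necI h ih => intro M i j _; exact ih M j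

/-! ### Propositional tautologies -/

section Tauts
variable [Nonempty Var]

/-- A fixed contradictory formula. -/
noncomputable def bot : Fm Var Ag :=
  (Fm.var (Classical.arbitrary Var)).and (Fm.var (Classical.arbitrary Var)).neg

lemma t_id (φ : Fm Var Ag) : Deriv (φ.impl φ) := by
  apply Deriv.taut; intro v hn ha
  simp only [Fm.impl, Fm.or, hn, ha]
  cases v φ <;> rfl

lemma t_k (φ ψ : Fm Var Ag) : Deriv (φ.impl (ψ.impl φ)) := by
  apply Deriv.taut; intro v hn ha
  simp only [Fm.impl, Fm.or, hn, ha]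
  cases v φ <;> cases v ψ <;> rfl

lemma t_s (χ φ ψ : Fm Var Ag) :
    Deriv ((χ.impl (φ.impl ψ)).impl ((χ.impl φ).impl (χ.impl ψ))) := by
  apply Deriv.taut; intro v hn ha
  simp only [Fm.impl, Fm.or, hn, ha]
  cases v χ <;> cases v φ <;> cases v ψ <;> rfl

lemma t_notbot : Deriv (Fm.neg (bot : Fm Var Ag)) := by
  apply Deriv.taut; intro v hn ha
  simp only [bot, hn, ha]
  cases v (Fm.var (Classical.arbitrary Var)) <;> rfl

lemma t_negE (φ : Fm Var Ag) : Deriv (φ.neg.impl (φ.impl bot)) := by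
  apply Deriv.taut; intro v hn ha
  simp only [bot, Fm.impl, Fm.or, hn, ha]
  cases v φ <;> cases v (Fm.var (Classical.arbitrary Var)) <;> rfl

lemma t_dne (φ : Fm Var Ag) : Deriv ((φ.neg.impl bot).impl φ) := by
  apply Deriv.taut; intro v hn ha
  simp only [bot, Fm.impl, Fm.or, hn, ha]
  cases v φ <;> cases v (Fm.var (Classical.arbitrary Var)) <;> rfl

lemma t_contr (φ : Fm Var Ag) :
    Deriv ((φ.impl bot).impl ((φ.neg.impl bot).impl bot)) := by
  apply Deriv.taut; intro v hn ha
  simp only [bot, Fm.impl, Fm.or, hn, ha]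
  cases v φ <;> cases v (Fm.var (Classical.arbitrary Var)) <;> rfl

lemma t_and1 (φ ψ : Fm Var Ag) : Deriv ((φ.and ψ).impl φ) := by
  apply Deriv.taut; intro v hn ha
  simp only [Fm.impl, Fm.or, hn, ha]
  cases v φ <;> cases v ψ <;> rfl

lemma t_and2 (φ ψ : Fm Var Ag) : Deriv ((φ.and ψ).impl ψ) := by
  apply Deriv.taut; intro v hn ha
  simp only [Fm.impl, Fm.or, hn, ha]
  cases v φ <;> cases v ψ <;> rfl

lemma t_andI (φ ψ : Fm Var Ag) : Deriv (φ.impl (ψ.impl (φ.and ψ))) := by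
  apply Deriv.taut; intro v hn ha
  simp only [Fm.impl, Fm.or, hn, ha]
  cases v φ <;> cases v ψ <;> rfl

end Tauts

/-! ### Derivability from a set of hypotheses -/

/-- Local consequence: derivable from `Γ` using modus ponens only
(necessitation is not applied to hypotheses). -/
inductive DF (Γ : Set (Fm Var Ag)) : Fm Var Ag → Prop
  | ax {φ} : Deriv φ → DF Γ φ
  | mem {φ} : φ ∈ Γ → DF Γ φ
  | mp {φ ψ} : DF Γ φ → DF Γ (φ.impl ψ) → DF Γ ψ

lemma DF.mono {Γ Δ : Set (Fm Var Ag)} {φ : Fm Var Ag} (h : DF Γ φ) (hs : Γ ⊆ Δ) :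
    DF Δ φ := by
  induction h with
  | ax h => exact DF.ax h
  | mem h => exact DF.mem (hs h)
  | mp _ _ ih1 ih2 => exact DF.mp ih1 ih2

lemma df_empty {φ : Fm Var Ag} (h : DF (∅ : Set (Fm Var Ag)) φ) : Deriv φ := by
  induction h with
  | ax h => exact h
  | mem h => exact absurd h (Set.notMem_empty _)
  | mp _ _ ih1 ih2 => exact Deriv.mp ih1 ih2

/-- Deduction theorem. -/
lemma df_dedn [Nonempty Var] {Γ : Set (Fm Var Ag)} {χ φ : Fm Var Ag}
    (h : DF (insert χ Γ) φ) : DF Γ (χ.impl φ) := by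
  induction h with
  | ax h => exact DF.mp (DF.ax h) (DF.ax (t_k _ _))
  | @mem φ h =>
    rcases h with h | h
    · subst h; exact DF.ax (t_id _)
    · exact DF.mp (DF.mem h) (DF.ax (t_k _ _))
  | mp _ _ ih1 ih2 => exact DF.mp ih1 (DF.mp ih2 (DF.ax (t_s _ _ _)))

/-- Compactness: a derivation uses finitely many hypotheses. -/
lemma df_fin {Γ : Set (Fm Var Ag)} {φ : Fm Var Ag} (h : DF Γ φ) :
    ∃ L : List (Fm Var Ag), (∀ ψ ∈ L, ψ ∈ Γ) ∧ DF {ψ | ψ ∈ L} φ := by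
  induction h with
  | ax h => exact ⟨[], by simp, DF.ax h⟩
  | @mem φ h => exact ⟨[φ], by simpa using h, DF.mem (by simp)⟩
  | @mp φ ψ _ _ ih1 ih2 =>
    obtain ⟨L1, hL1, hd1⟩ := ih1
    obtain ⟨L2, hL2, hd2⟩ := ih2
    refine ⟨L1 ++ L2, ?_, ?_⟩
    · intro ψ hψ; rcases List.mem_append.mp hψ with h | h
      · exact hL1 _ h
      · exact hL2 _ h
    · refine DF.mp (hd1.mono ?_) (hd2.mono ?_) <;>
        · intro x hx
          simp only [Set.mem_setOf_eq, List.mem_append] at hx ⊢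
          tauto

/-- Lifting a derivation through a box modality. -/
lemma df_box {box : Fm Var Ag → Fm Var Ag}
    (hK : ∀ φ ψ : Fm Var Ag, Deriv ((box (φ.impl ψ)).impl ((box φ).impl (box ψ))))
    (hnec : ∀ φ : Fm Var Ag, Deriv φ → Deriv (box φ))
    {Δ : Set (Fm Var Ag)} {χ : Fm Var Ag} (h : DF Δ χ) :
    DF (box '' Δ) (box χ) := by
  induction h with
  | ax h => exact DF.ax (hnec _ h)
  | mem h => exact DF.mem ⟨_, h, rfl⟩
  | mp _ _ ih1 ih2 => exact DF.mp ih1 (DF.mp ih2 (DF.ax (hK _ _)))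

/-! ### Maximal consistent sets -/

section MCS
variable [Nonempty Var]

def Cons (Γ : Set (Fm Var Ag)) : Prop := ¬ DF Γ (bot : Fm Var Ag)

def MCS (Γ : Set (Fm Var Ag)) : Prop := Cons Γ ∧ ∀ φ : Fm Var Ag, φ ∈ Γ ∨ φ.neg ∈ Γ

lemma df_bot_of_both {Γ : Set (Fm Var Ag)} {φ : Fm Var Ag}
    (h1 : DF Γ φ) (h2 : DF Γ φ.neg) : DF Γ (bot : Fm Var Ag) :=
  DF.mp h1 (DF.mp h2 (DF.ax (t_negE _)))

lemma mcs_df {Γ : Set (Fm Var Ag)} (hΓ : MCS Γ) {φ : Fm Var Ag} (h : DF Γ φ) :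
    φ ∈ Γ := by
  rcases hΓ.2 φ with hm | hm
  · exact hm
  · exact absurd (df_bot_of_both h (DF.mem hm)) hΓ.1

lemma mcs_neg {Γ : Set (Fm Var Ag)} (hΓ : MCS Γ) {φ : Fm Var Ag} :
    φ.neg ∈ Γ ↔ φ ∉ Γ := by
  constructor
  · intro hn hp
    exact hΓ.1 (df_bot_of_both (DF.mem hp) (DF.mem hn))
  · intro hp
    rcases hΓ.2 φ with h | h
    · exact absurd h hp
    · exact h

lemma mcs_and {Γ : Set (Fm Var Ag)} (hΓ : MCS Γ) {φ ψ : Fm Var Ag} :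
    φ.and ψ ∈ Γ ↔ (φ ∈ Γ ∧ ψ ∈ Γ) := by
  constructor
  · intro h
    exact ⟨mcs_df hΓ (DF.mp (DF.mem h) (DF.ax (t_and1 _ _))),
           mcs_df hΓ (DF.mp (DF.mem h) (DF.ax (t_and2 _ _)))⟩
  · rintro ⟨h1, h2⟩
    exact mcs_df hΓ (DF.mp (DF.mem h2) (DF.mp (DF.mem h1) (DF.ax (t_andI _ _))))

/-- A finite (list) subset of the union of a chain is contained in a member. -/
lemma list_subset_chain {c : Set (Set (Fm Var Ag))} (hc : IsChain (· ⊆ ·) c)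
    {t0 : Set (Fm Var Ag)} (ht0 : t0 ∈ c) (L : List (Fm Var Ag))
    (hL : ∀ ψ ∈ L, ψ ∈ ⋃₀ c) : ∃ t ∈ c, ∀ ψ ∈ L, ψ ∈ t := by
  induction L with
  | nil => exact ⟨t0, ht0, by simp⟩
  | cons a L ih =>
    obtain ⟨t, htc, ht⟩ := ih (fun ψ hψ => hL ψ (List.mem_cons_of_mem a hψ))
    obtain ⟨s, hsc, has⟩ := hL a (List.mem_cons_self)
    rcases eq_or_ne s t with rfl | hne
    · exact ⟨s, hsc, by
        intro ψ hψ
        rcases List.mem_cons.mp hψ with rfl | h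
        · exact has
        · exact ht ψ h⟩
    rcases hc hsc htc hne with hst | hts
    · exact ⟨t, htc, by
        intro ψ hψ
        rcases List.mem_cons.mp hψ with rfl | h
        · exact hst has
        · exact ht ψ h⟩
    · exact ⟨s, hsc, by
        intro ψ hψ
        rcases List.mem_cons.mp hψ with rfl | h
        · exact has
        · exact hts (ht ψ h)⟩

lemma lindenbaum {Γ : Set (Fm Var Ag)} (h : Cons Γ) :
    ∃ Δ : Set (Fm Var Ag), Γ ⊆ Δ ∧ MCS Δ := by
  have hz : ∀ c ⊆ {Δ : Set (Fm Var Ag) | Cons Δ}, IsChain (· ⊆ ·) c → c.Nonempty →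
      ∃ ub ∈ {Δ : Set (Fm Var Ag) | Cons Δ}, ∀ s ∈ c, s ⊆ ub := by
    intro c hcS hchain hcne
    obtain ⟨t0, ht0⟩ := hcne
    refine ⟨⋃₀ c, ?_, fun s hs => Set.subset_sUnion_of_mem hs⟩
    intro hbot
    obtain ⟨L, hL, hd⟩ := df_fin hbot
    obtain ⟨t, htc, ht⟩ := list_subset_chain hchain ht0 L hL
    exact hcS htc (hd.mono (fun x hx => ht x hx))
  obtain ⟨Δ, hsub, hmax⟩ :=
    zorn_subset_nonempty {Δ : Set (Fm Var Ag) | Cons Δ} hz Γ h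
  refine ⟨Δ, hsub, hmax.1, ?_⟩
  intro φ
  by_contra hn
  push_neg at hn
  obtain ⟨h1, h2⟩ := hn
  have hins : ∀ χ : Fm Var Ag, χ ∉ Δ → DF Δ (χ.impl bot) := by
    intro χ hχ
    by_contra hd
    have hcons : Cons (insert χ Δ) := by
      intro hb
      exact hd (df_dedn hb)
    have := hmax.2 hcons (Set.subset_insert χ Δ)
    exact hχ (this (Set.mem_insert χ Δ))
  exact hmax.1
    (DF.mp (hins _ h2) (DF.mp (hins _ h1) (DF.ax (t_contr φ))))

/-- Consistency of the dual-modal inverse image of an MCS (seriality). -/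
lemma cons_boxinv {box : Fm Var Ag → Fm Var Ag}
    (hK : ∀ φ ψ : Fm Var Ag, Deriv ((box (φ.impl ψ)).impl ((box φ).impl (box ψ))))
    (hnec : ∀ φ : Fm Var Ag, Deriv φ → Deriv (box φ))
    (hD : ∀ φ : Fm Var Ag, Deriv ((box φ).impl (box φ.neg).neg))
    {Γ : Set (Fm Var Ag)} (hΓ : MCS Γ) : Cons {φ | box φ ∈ Γ} := by
  intro hbot
  have h1 : DF (box '' {φ | box φ ∈ Γ}) (box (bot : Fm Var Ag)) :=
    df_box hK hnec hbot
  have h2 : DF Γ (box (bot : Fm Var Ag)) :=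
    h1.mono (by rintro _ ⟨ψ, hψ, rfl⟩; exact hψ)
  have h3 : DF Γ ((box (Fm.neg (bot : Fm Var Ag))).neg) :=
    DF.mp h2 (DF.ax (hD _))
  have h4 : DF Γ (box (Fm.neg (bot : Fm Var Ag))) :=
    DF.ax (hnec _ t_notbot)
  exact hΓ.1 (df_bot_of_both h4 h3)

/-- Existence lemma. -/
lemma existence {box : Fm Var Ag → Fm Var Ag}
    (hK : ∀ φ ψ : Fm Var Ag, Deriv ((box (φ.impl ψ)).impl ((box φ).impl (box ψ))))
    (hnec : ∀ φ : Fm Var Ag, Deriv φ → Deriv (box φ))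
    {Γ : Set (Fm Var Ag)} (hΓ : MCS Γ) {φ : Fm Var Ag} (h : box φ ∉ Γ) :
    ∃ Δ : Set (Fm Var Ag), MCS Δ ∧ (∀ ψ, box ψ ∈ Γ → ψ ∈ Δ) ∧ φ ∉ Δ := by
  have hcons : Cons (insert φ.neg {ψ | box ψ ∈ Γ}) := by
    intro hbot
    have h1 : DF {ψ | box ψ ∈ Γ} (φ.neg.impl bot) := df_dedn hbot
    have h2 : DF {ψ | box ψ ∈ Γ} φ := DF.mp h1 (DF.ax (t_dne φ))
    have h3 : DF (box '' {ψ | box ψ ∈ Γ}) (box φ) := df_box hK hnec h2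
    have h4 : DF Γ (box φ) := h3.mono (by rintro _ ⟨ψ, hψ, rfl⟩; exact hψ)
    exact h (mcs_df hΓ h4)
  obtain ⟨Δ, hsub, hΔ⟩ := lindenbaum hcons
  refine ⟨Δ, hΔ, fun ψ hψ => hsub (Set.mem_insert_of_mem _ hψ), ?_⟩
  exact (mcs_neg hΔ).mp (hsub (Set.mem_insert _ _))

/-! ### The canonical model -/

/-- The canonical `S`-model. -/
noncomputable def canM : SKripkeModel Var Ag where
  W := {Γ : Set (Fm Var Ag) // MCS Γ}
  RI a Γ Δ := ∀ φ : Fm Var Ag, φ.int a ∈ Γ.1 → φ ∈ Δ.1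
  RK a Γ Δ := ∀ φ : Fm Var Ag, φ.kn a ∈ Γ.1 → φ ∈ Δ.1
  RB a Γ Δ := ∀ φ : Fm Var Ag, φ.bel a ∈ Γ.1 → φ ∈ Δ.1
  RB_serial := by
    intro a Γ
    have hcons : Cons {φ : Fm Var Ag | φ.bel a ∈ Γ.1} :=
      cons_boxinv (fun φ ψ => Deriv.a2B) (fun φ h => Deriv.necB h)
        (fun φ => Deriv.a5) Γ.2
    obtain ⟨Δ, hsub, hΔ⟩ := lindenbaum hcons
    exact ⟨⟨Δ, hΔ⟩, fun φ h => hsub h⟩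
  RI_serial := by
    intro a Γ
    have hcons : Cons {φ : Fm Var Ag | φ.int a ∈ Γ.1} :=
      cons_boxinv (fun φ ψ => Deriv.a2I) (fun φ h => Deriv.necI h)
        (fun φ => Deriv.a8) Γ.2
    obtain ⟨Δ, hsub, hΔ⟩ := lindenbaum hcons
    exact ⟨⟨Δ, hΔ⟩, fun φ h => hsub h⟩
  RI_trans := by
    intro a Γ Δ W h1 h2 φ h
    exact h2 φ (h1 _ (mcs_df Γ.2 (DF.mp (DF.mem h) (DF.ax Deriv.a11))))
  RK_refl := by
    intro a Γ φ h
    exact mcs_df Γ.2 (DF.mp (DF.mem h) (DF.ax Deriv.a3))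
  RK_trans := by
    intro a Γ Δ W h1 h2 φ h
    exact h2 φ (h1 _ (mcs_df Γ.2 (DF.mp (DF.mem h) (DF.ax Deriv.a4))))
  RK_RI := by
    intro a Γ Δ W h1 h2 φ h
    exact h2 φ (h1 _ (mcs_df Γ.2 (DF.mp (DF.mem h) (DF.ax Deriv.a9))))
  RB_sub_RK := by
    intro a Γ Δ h1 φ h
    exact h1 φ (mcs_df Γ.2 (DF.mp (DF.mem h) (DF.ax Deriv.a6)))
  RK_RB := by
    intro a Γ Δ W h1 h2 φ h
    exact h2 φ (h1 _ (mcs_df Γ.2 (DF.mp (DF.mem h) (DF.ax Deriv.a7))))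
  RI_RK := by
    intro a Γ Δ W h1 h2 φ h
    exact h2 φ (h1 _ (mcs_df Γ.2 (DF.mp (DF.mem h) (DF.ax Deriv.a10))))
  val p := {Γ | Fm.var p ∈ Γ.1}

lemma truth_lemma (Γ : (canM (Var := Var) (Ag := Ag)).W) (φ : Fm Var Ag) :
    Truth canM Γ φ ↔ φ ∈ Γ.1 := by
  induction φ generalizing Γ with
  | var p => exact Iff.rfl
  | neg φ ih =>
    show (¬ Truth canM Γ φ) ↔ _
    rw [ih Γ]
    exact (mcs_neg Γ.2).symm
  | and φ ψ ih1 ih2 =>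
    show (Truth canM Γ φ ∧ Truth canM Γ ψ) ↔ _
    rw [ih1 Γ, ih2 Γ, mcs_and Γ.2]
  | int a φ ih =>
    constructor
    · intro h
      by_contra hn
      obtain ⟨Δ, hΔ, hsub, hφ⟩ :=
        existence (fun φ ψ => Deriv.a2I) (fun φ h => Deriv.necI h) Γ.2 hn
      exact hφ ((ih ⟨Δ, hΔ⟩).mp (h ⟨Δ, hΔ⟩ hsub))
    · intro h Δ hΔ
      exact (ih Δ).mpr (hΔ φ h)
  | kn a φ ih =>
    constructor
    · intro h
      by_contra hn
      obtain ⟨Δ, hΔ, hsub, hφ⟩ :=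
        existence (fun φ ψ => Deriv.a2K) (fun φ h => Deriv.necK h) Γ.2 hn
      exact hφ ((ih ⟨Δ, hΔ⟩).mp (h ⟨Δ, hΔ⟩ hsub))
    · intro h Δ hΔ
      exact (ih Δ).mpr (hΔ φ h)
  | bel a φ ih =>
    constructor
    · intro h
      by_contra hn
      obtain ⟨Δ, hΔ, hsub, hφ⟩ :=
        existence (fun φ ψ => Deriv.a2B) (fun φ h => Deriv.necB h) Γ.2 hn
      exact hφ ((ih ⟨Δ, hΔ⟩).mp (h ⟨Δ, hΔ⟩ hsub))
    · intro h Δ hΔ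
      exact (ih Δ).mpr (hΔ φ h)

theorem completeness {φ : Fm Var Ag} (h : SValid φ) : Deriv φ := by
  by_contra hn
  have hc : Cons {Fm.neg φ} := by
    intro hbot
    have h1 : DF (∅ : Set (Fm Var Ag)) (φ.neg.impl bot) := by
      apply df_dedn
      exact hbot.mono (by simp)
    exact hn (Deriv.mp (df_empty h1) (t_dne φ))
  obtain ⟨Δ, hsub, hΔ⟩ := lindenbaum hc
  have hmem : Fm.neg φ ∈ Δ := hsub rfl
  have hnt : ¬ Truth canM (⟨Δ, hΔ⟩ : (canM (Var := Var) (Ag := Ag)).W) φ := by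
    intro ht
    exact (mcs_neg hΔ).mp hmem ((truth_lemma ⟨Δ, hΔ⟩ φ).mp ht)
  exact hnt (h canM ⟨Δ, hΔ⟩)

end MCS

end SProof

/-- Soundness and completeness of `S`: a formula is derivable iff it is `S`-valid. -/
theorem soundness_and_completeness {Var Ag : Type}
    [Countable Var] [Infinite Var] [Fintype Ag] [Nonempty Ag]
    (φ : Fm Var Ag) : Deriv φ ↔ SValid φ :=
  ⟨SProof.soundness, SProof.completeness⟩
end

section
/- No agent can keep a secret from herself: for every S-model, every agent a, every truth set P : W → Prop, and every world i, (S_{a,a} P) i fails. -/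
/-- An S-model: a set of worlds with, for each agent, intention, knowledge and
belief accessibility relations satisfying the S-frame conditions. -/
structure SModel (Ag W : Type) where
  RI : Ag → W → W → Prop
  RK : Ag → W → W → Prop
  RB : Ag → W → W → Prop
  RB_serial : ∀ a i, ∃ j, RB a i j
  RI_serial : ∀ a i, ∃ j, RI a i j
  RI_trans : ∀ a ⦃i j k⦄, RI a i j → RI a j k → RI a i k
  RK_refl : ∀ a i, RK a i i
  RK_trans : ∀ a ⦃i j k⦄, RK a i j → RK a j k → RK a i k
  RK_RI : ∀ a ⦃i j w⦄, RK a i j → RI a j w → RI a i w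
  RB_sub_RK : ∀ a ⦃i j⦄, RB a i j → RK a i j
  RK_RB : ∀ a ⦃i j w⦄, RK a i j → RB a j w → RB a i w
  RI_RK : ∀ a ⦃i j w⦄, RI a i j → RK a j w → RI a i w

namespace SModel

variable {Ag W : Type}

/-- Knowledge operator on truth sets. -/
def Kop (M : SModel Ag W) (a : Ag) (P : W → Prop) (i : W) : Prop :=
  ∀ j, M.RK a i j → P j

/-- Belief operator on truth sets. -/
def Bop (M : SModel Ag W) (a : Ag) (P : W → Prop) (i : W) : Prop :=
  ∀ j, M.RB a i j → P j

/-- Intention operator on truth sets. -/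
def Iop (M : SModel Ag W) (a : Ag) (P : W → Prop) (i : W) : Prop :=
  ∀ j, M.RI a i j → P j

/-- The secrecy operator `S_{a,b}`. -/
def Sec (M : SModel Ag W) (a b : Ag) (P : W → Prop) (i : W) : Prop :=
  M.Kop a P i ∧ M.Bop a (fun w => ¬ M.Kop b P w) i ∧
    M.Iop a (fun w => P w ∧ ¬ M.Kop b P w) i

end SModel

theorem no_self_secret {Ag W : Type} (M : SModel Ag W) (a : Ag) (P : W → Prop) (i : W) :
    ¬ M.Sec a a P i := by
  rintro ⟨hK, hB, hI⟩
  obtain ⟨j, hij⟩ := M.RI_serial a i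
  obtain ⟨hPj, hnK⟩ := hI j hij
  apply hnK
  intro w hjw
  exact (hI w (M.RI_RK a hij hjw)).1
end

section
/- Tautologies and contradictions cannot be kept secret: for every S-model, all agents a ≠ b, and every world i, both (S_{a,b} (fun _ => True)) i and (S_{a,b} (fun _ => False)) i fail. -/
theorem no_secret_tautology_or_contradiction {Ag W : Type} (M : SModel Ag W)
    (a b : Ag) (hab : a ≠ b) (i : W) :
    ¬ M.Sec a b (fun _ => True) i ∧ ¬ M.Sec a b (fun _ => False) i := by
  constructor
  · rintro ⟨-, hB, -⟩
    obtain ⟨j, hj⟩ := M.RB_serial a i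
    exact hB j hj (fun _ _ => trivial)
  · rintro ⟨hK, -, -⟩
    exact hK i (M.RK_refl a i)
end

section
/- Awareness and idempotence of secrecy: for every S-model, all agents a ≠ b, every truth set P : W → Prop, and every world i, (S_{a,b} P) i implies (K_a (S_{a,b} P)) i, and moreover (S_{a,b} P) i holds if and only if (S_{a,b} (S_{a,b} P)) i holds. -/
theorem secret_awareness_and_idempotence {Ag W : Type} (M : SModel Ag W)
    (a b : Ag) (hab : a ≠ b) (P : W → Prop) (i : W) :
    (M.Sec a b P i → M.Kop a (M.Sec a b P) i) ∧
      (M.Sec a b P i ↔ M.Sec a b (M.Sec a b P) i) := by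
  -- auxiliary: Sec implies P pointwise
  have secP : ∀ w, M.Sec a b P w → P w := fun w h => h.1 w (M.RK_refl a w)
  -- K_b (Sec P) implies K_b P
  have kb : ∀ w, M.Kop b (M.Sec a b P) w → M.Kop b P w :=
    fun w h v hv => secP v (h v hv)
  -- awareness
  have aware : ∀ i, M.Sec a b P i → M.Kop a (M.Sec a b P) i := by
    intro i h j hij
    obtain ⟨hK, hB, hI⟩ := h
    refine ⟨fun v hv => hK v (M.RK_trans a hij hv),
      fun v hv => hB v (M.RK_RB a hij hv),
      fun v hv => hI v (M.RK_RI a hij hv)⟩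
  refine ⟨aware i, ⟨fun h => ?_, fun h => h.1 i (M.RK_refl a i)⟩⟩
  obtain ⟨hK, hB, hI⟩ := h
  refine ⟨aware i ⟨hK, hB, hI⟩, ?_, ?_⟩
  · intro w hw hk
    exact hB w hw (kb w hk)
  · intro w hw
    refine ⟨⟨fun v hv => (hI v (M.RI_RK a hw hv)).1,
      fun v hv => (hI v (M.RI_RK a hw (M.RB_sub_RK a hv))).2,
      fun v hv => hI v (M.RI_trans a hw hv)⟩,
      fun hk => (hI w hw).2 (kb w hk)⟩
end

section
/- For every S-model, all agents a ≠ b, every truth set P : W → Prop, and every world i: (1) if ¬ (K_b P) i then ¬ (K_b (S_{a,b} P)) i; and (2) if (S_{a,b} P) i then (S_{a,b} (K_a P)) i. -/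
theorem secret_knowledge_props {Ag W : Type} (M : SModel Ag W)
    (a b : Ag) (hab : a ≠ b) (P : W → Prop) (i : W) :
    (¬ M.Kop b P i → ¬ M.Kop b (M.Sec a b P) i) ∧
      (M.Sec a b P i → M.Sec a b (M.Kop a P) i) := by
  constructor
  · intro hnK hKS
    apply hnK
    intro j hj
    exact (hKS j hj).1 j (M.RK_refl a j)
  · rintro ⟨hK, hB, hI⟩
    refine ⟨?_, ?_, ?_⟩
    · intro j hj w hw
      exact hK w (M.RK_trans a hj hw)
    · intro j hj hKb
      exact hB j hj (fun w hw => hKb w hw w (M.RK_refl a w))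
    · intro j hj
      refine ⟨fun w hw => (hI w (M.RI_RK a hj hw)).1, ?_⟩
      intro hKb
      exact (hI j hj).2 (fun w hw => hKb w hw w (M.RK_refl a w))
end

section
/- An agent cannot keep secret from b the fact that b is keeping something secret from her: for every S-model, all agents a ≠ b, every truth set P : W → Prop, and every world i, (S_{a,b} (S_{b,a} P)) i fails. -/
theorem no_secret_of_others_secret_from_self {Ag W : Type} (M : SModel Ag W)
    (a b : Ag) (hab : a ≠ b) (P : W → Prop) (i : W) :
    ¬ M.Sec a b (M.Sec b a P) i := by
  rintro ⟨hK, hB, hI⟩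
  obtain ⟨j, hij⟩ := M.RI_serial a i
  obtain ⟨⟨hKb, hBb, hIb⟩, hnK⟩ := hI j hij
  exact hnK fun w hw =>
    ⟨fun v hv => hKb v (M.RK_trans b hw hv),
     fun v hv => hBb v (M.RK_RB b hw hv),
     fun v hv => hIb v (M.RK_RI b hw hv)⟩
end

section
/- Iterated intention of secrecy: for every S-model, all agents a, b, every truth set P : W → Prop, every world i, and every natural number n ≥ 1, if (S_{a,b} P) i then (I_a^n (S_{a,b} P)) i, where I_a^0 Q := Q and I_a^{n+1} Q := I_a (I_a^n Q). -/
/-- Iterated intention operator: `I_a^0 Q = Q`, `I_a^{n+1} Q = I_a (I_a^n Q)`. -/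
def SModel.iterI {Ag W : Type} (M : SModel Ag W) (a : Ag) : ℕ → (W → Prop) → (W → Prop)
  | 0, Q => Q
  | n + 1, Q => M.Iop a (M.iterI a n Q)

lemma sec_step {Ag W : Type} (M : SModel Ag W) (a b : Ag) (P : W → Prop) (i : W)
    (h : M.Sec a b P i) : M.Iop a (M.Sec a b P) i := by
  obtain ⟨hK, hB, hI⟩ := h
  intro j hij
  refine ⟨?_, ?_, ?_⟩
  · intro k hjk
    exact (hI k (M.RI_RK a hij hjk)).1
  · intro k hjk
    exact (hI k (M.RI_RK a hij (M.RB_sub_RK a hjk))).2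
  · intro k hjk
    exact hI k (M.RI_trans a hij hjk)

theorem secret_iterated_intention {Ag W : Type} (M : SModel Ag W)
    (a b : Ag) (P : W → Prop) (i : W) (n : ℕ) (hn : 1 ≤ n) :
    M.Sec a b P i → M.iterI a n (M.Sec a b P) i := by
  induction n generalizing i with
  | zero => omega
  | succ m ih =>
    intro h
    rcases Nat.eq_zero_or_pos m with h1 | h1
    · subst h1
      exact sec_step M a b P i h
    · intro j hij
      exact ih j h1 (sec_step M a b P i h j hij)
end

section
/- An agent cannot keep b's own attitudes secret from b: for every S-model, all agents a ≠ b, every truth set P : W → Prop, and every world i, each of (S_{a,b} (K_b P)) i, (S_{a,b} (I_b P)) i, and (S_{a,b} (B_b P)) i fails. -/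
theorem no_secret_of_nescients_attitudes {Ag W : Type} (M : SModel Ag W)
    (a b : Ag) (hab : a ≠ b) (P : W → Prop) (i : W) :
    ¬ M.Sec a b (M.Kop b P) i ∧ ¬ M.Sec a b (M.Iop b P) i ∧
      ¬ M.Sec a b (M.Bop b P) i := by
  obtain ⟨j, hj⟩ := M.RI_serial a i
  refine ⟨?_, ?_, ?_⟩
  · rintro ⟨-, -, hI⟩
    obtain ⟨hK, hnK⟩ := hI j hj
    exact hnK fun w hw => fun v hv => hK v (M.RK_trans b hw hv)
  · rintro ⟨-, -, hI⟩
    obtain ⟨hK, hnK⟩ := hI j hj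
    exact hnK fun w hw => fun v hv => hK v (M.RK_RI b hw hv)
  · rintro ⟨-, -, hI⟩
    obtain ⟨hK, hnK⟩ := hI j hj
    exact hnK fun w hw => fun v hv => hK v (M.RK_RB b hw hv)
end

section
/- Coherency of secrecy intentions: for every S-model, all agents a ≠ b, every truth set P : W → Prop, and every world i, (I_a (K_b (S_{a,b} P))) i fails; i.e., no agent can intend to let b know that she is keeping P secret from b. -/
theorem no_intention_to_disclose_secrecy {Ag W : Type} (M : SModel Ag W)
    (a b : Ag) (hab : a ≠ b) (P : W → Prop) (i : W) :
    ¬ M.Iop a (M.Kop b (M.Sec a b P)) i := by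
  intro h
  obtain ⟨j, hij⟩ := M.RI_serial a i
  obtain ⟨w, hjw⟩ := M.RI_serial a j
  have hsec := h j hij j (M.RK_refl b j)
  obtain ⟨hPw, hnKb⟩ := hsec.2.2 w hjw
  have hKb : M.Kop b P w := by
    intro w' hww'
    exact (h w (M.RI_trans a hij hjw) w' hww').1 w' (M.RK_refl a w')
  exact hnKb hKb
end

section
/- Failure of secret negation completeness: there exist an S-model over an agent set with two distinct agents a and b, a world i, and a truth set P : W → Prop such that (K_a P) i holds, (S_{a,b} P) i fails, and (K_a (fun w => ¬ (S_{a,b} P) w)) i fails. -/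
/-- A single accessibility relation used for all three relations of each agent. -/
def cRel (a : Bool) (i j : Fin 4) : Prop :=
  i = j ∨ (if a then (i = 0 ∧ (j = 1 ∨ j = 2)) ∨ (i = 1 ∧ j = 2)
           else (i = 1 ∨ i = 2) ∧ j = 3)

instance : ∀ a i j, Decidable (cRel a i j) := by
  intro a i j; unfold cRel; infer_instance

def cModel : SModel Bool (Fin 4) where
  RI := cRel
  RK := cRel
  RB := cRel
  RB_serial := by decide
  RI_serial := by decide
  RI_trans := by decide
  RK_refl := by decide
  RK_trans := by decide
  RK_RI := by decide
  RB_sub_RK := by decide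
  RK_RB := by decide
  RI_RK := by decide

theorem secret_negation_completeness_fails :
    ∃ (Ag W : Type) (M : SModel Ag W) (a b : Ag), a ≠ b ∧
      ∃ (i : W) (P : W → Prop),
        M.Kop a P i ∧ ¬ M.Sec a b P i ∧
          ¬ M.Kop a (fun w => ¬ M.Sec a b P w) i := by
  refine ⟨Bool, Fin 4, cModel, true, false, by decide, 0, fun w => w ≠ 3, ?_, ?_, ?_⟩ <;>
    simp only [SModel.Sec, SModel.Kop, SModel.Bop, SModel.Iop, cModel] <;> decide
end

section
/- Generalized interpolation for secrecy: for every S-model, all agents a, b, every n ≥ 2, and all truth sets P_1, …, P_n : W → Prop such that P_k w → P_{k+1} w for every world w and every 1 ≤ k < n, for every world i: if (S_{a,b} P_1) i and (S_{a,b} P_n) i, then (S_{a,b} P_k) i for every 1 ≤ k ≤ n. -/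
theorem generalized_interpolation {Ag W : Type} (M : SModel Ag W) (a b : Ag)
    (n : ℕ) (hn : 2 ≤ n) (P : ℕ → W → Prop)
    (hchain : ∀ k, 1 ≤ k → k < n → ∀ w, P k w → P (k + 1) w) (i : W)
    (h1 : M.Sec a b (P 1) i) (hlast : M.Sec a b (P n) i) :
    ∀ k, 1 ≤ k → k ≤ n → M.Sec a b (P k) i := by
  -- monotonicity of the chain
  have mono : ∀ l, l ≤ n → ∀ k, 1 ≤ k → k ≤ l → ∀ w, P k w → P l w := by
    intro l
    induction l with
    | zero => intro _ k hk hkl; omega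
    | succ m ih =>
      intro hln k hk hkl w hw
      rcases Nat.lt_or_ge k (m+1) with h | h
      · have hkm : k ≤ m := by omega
        have h1m : 1 ≤ m := by omega
        exact hchain m h1m (by omega) w (ih (by omega) k hk hkm w hw)
      · have : k = m + 1 := by omega
        subst this; exact hw
  intro k hk hkn
  obtain ⟨hK1, hB1, hI1⟩ := h1
  obtain ⟨hKn, hBn, hIn⟩ := hlast
  have h1k : ∀ w, P 1 w → P k w := mono k (le_trans hkn le_rfl) 1 le_rfl hk
  have hkn' : ∀ w, P k w → P n w := mono n le_rfl k hk hkn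
  refine ⟨?_, ?_, ?_⟩
  · intro j hj; exact h1k j (hK1 j hj)
  · intro j hj hKbk
    exact hBn j hj (fun w hw => hkn' w (hKbk w hw))
  · intro j hj
    refine ⟨h1k j (hI1 j hj).1, ?_⟩
    intro hKbk
    exact (hIn j hj).2 (fun w hw => hkn' w (hKbk w hw))
end

section
/- Decay of secrecy of implications: for every S-model, all agents a ≠ b, all truth sets P, Q : W → Prop, and every world i: (1) if (B_a (K_b Q)) i or (I_a (K_b Q)) i, then (S_{a,b} (fun w => P w → Q w)) i fails; and (2) if (B_a (K_b (fun w => ¬ P w))) i or (I_a (K_b (fun w => ¬ P w))) i, then (S_{a,b} (fun w => P w → Q w)) i fails. -/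
theorem secrecy_of_implication_decays {Ag W : Type} (M : SModel Ag W)
    (a b : Ag) (hab : a ≠ b) (P Q : W → Prop) (i : W) :
    ((M.Bop a (M.Kop b Q) i ∨ M.Iop a (M.Kop b Q) i) →
        ¬ M.Sec a b (fun w => P w → Q w) i) ∧
      ((M.Bop a (M.Kop b (fun w => ¬ P w)) i ∨ M.Iop a (M.Kop b (fun w => ¬ P w)) i) →
        ¬ M.Sec a b (fun w => P w → Q w) i) := by
  constructor
  · rintro (h | h) ⟨hK, hB, hI⟩
    · obtain ⟨j, hj⟩ := M.RB_serial a i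
      exact hB j hj (fun w hw _ => h j hj w hw)
    · obtain ⟨j, hj⟩ := M.RI_serial a i
      exact (hI j hj).2 (fun w hw _ => h j hj w hw)
  · rintro (h | h) ⟨hK, hB, hI⟩
    · obtain ⟨j, hj⟩ := M.RB_serial a i
      exact hB j hj (fun w hw hp => absurd hp (h j hj w hw))
    · obtain ⟨j, hj⟩ := M.RI_serial a i
      exact (hI j hj).2 (fun w hw hp => absurd hp (h j hj w hw))
end

section
/- Secrecy and conjunction: for every S-model, all agents a ≠ b, all truth sets P, Q : W → Prop, and every world i: (1) if (S_{a,b} P) i, (K_a Q) i, and (I_a Q) i, then (S_{a,b} (fun w => P w ∧ Q w)) i; (2) if (S_{a,b} P) i and (S_{a,b} Q) i, then (S_{a,b} (fun w => P w ∧ Q w)) i; (3) if (S_{a,b} (fun w => P w ∧ Q w)) i and (S_{a,b} (fun w => P w ∨ Q w)) i, then (S_{a,b} P) i and (S_{a,b} Q) i. -/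
theorem secrecy_and_conjunction {Ag W : Type} (M : SModel Ag W)
    (a b : Ag) (hab : a ≠ b) (P Q : W → Prop) (i : W) :
    (M.Sec a b P i → M.Kop a Q i → M.Iop a Q i →
        M.Sec a b (fun w => P w ∧ Q w) i) ∧
      (M.Sec a b P i → M.Sec a b Q i → M.Sec a b (fun w => P w ∧ Q w) i) ∧
      (M.Sec a b (fun w => P w ∧ Q w) i → M.Sec a b (fun w => P w ∨ Q w) i →
        M.Sec a b P i ∧ M.Sec a b Q i) := by
  have hK : ∀ (R S : W → Prop) j, (∀ w, R w → S w) → M.Kop b R j → M.Kop b S j := by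
    intro R S j h hR w hw; exact h _ (hR w hw)
  refine ⟨?_, ?_, ?_⟩
  · rintro ⟨hKP, hBP, hIP⟩ hKQ hIQ
    refine ⟨fun j hj => ⟨hKP j hj, hKQ j hj⟩, ?_, ?_⟩
    · intro j hj hKbPQ
      exact hBP j hj (hK _ P j (fun w hw => hw.1) hKbPQ)
    · intro j hj
      obtain ⟨hPj, hnKbP⟩ := hIP j hj
      exact ⟨⟨hPj, hIQ j hj⟩, fun hKbPQ => hnKbP (hK _ P j (fun w hw => hw.1) hKbPQ)⟩
  · rintro ⟨hKP, hBP, hIP⟩ ⟨hKQ, hBQ, hIQ⟩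
    refine ⟨fun j hj => ⟨hKP j hj, hKQ j hj⟩, ?_, ?_⟩
    · intro j hj hKbPQ
      exact hBP j hj (hK _ P j (fun w hw => hw.1) hKbPQ)
    · intro j hj
      obtain ⟨hPj, hnKbP⟩ := hIP j hj
      exact ⟨⟨hPj, (hIQ j hj).1⟩, fun hKbPQ => hnKbP (hK _ P j (fun w hw => hw.1) hKbPQ)⟩
  · rintro ⟨hKPQ, hBPQ, hIPQ⟩ ⟨hKor, hBor, hIor⟩
    constructor
    · refine ⟨fun j hj => (hKPQ j hj).1, ?_, ?_⟩
      · intro j hj hKbP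
        exact hBor j hj (hK P _ j (fun w hw => Or.inl hw) hKbP)
      · intro j hj
        obtain ⟨⟨hPj, _⟩, _⟩ := hIPQ j hj
        obtain ⟨_, hnKbor⟩ := hIor j hj
        exact ⟨hPj, fun hKbP => hnKbor (hK P _ j (fun w hw => Or.inl hw) hKbP)⟩
    · refine ⟨fun j hj => (hKPQ j hj).2, ?_, ?_⟩
      · intro j hj hKbQ
        exact hBor j hj (hK Q _ j (fun w hw => Or.inr hw) hKbQ)
      · intro j hj
        obtain ⟨⟨_, hQj⟩, _⟩ := hIPQ j hj
        obtain ⟨_, hnKbor⟩ := hIor j hj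
        exact ⟨hQj, fun hKbQ => hnKbor (hK Q _ j (fun w hw => Or.inr hw) hKbQ)⟩
end

section
/- Non-monotonicity of secrecy over conjunctions: there exist an S-model over an agent set with two distinct agents a and b, a world i, and truth sets P, Q : W → Prop such that (S_{a,b} (fun w => P w ∧ Q w)) i holds, but both (S_{a,b} P) i and (S_{a,b} Q) i fail. -/
/-- knowledge relation of agent `a` (= `true`). -/
def rka (i j : Fin 5) : Prop := i = j ∨ (i = 0 ∧ (j = 1 ∨ j = 2))

/-- belief/intention relation of agent `a`. -/
def rba (i j : Fin 5) : Prop := (i = 0 ∧ (j = 1 ∨ j = 2)) ∨ (i ≠ 0 ∧ i = j)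

/-- all relations of agent `b` (= `false`). -/
def rkb (i j : Fin 5) : Prop := i = j ∨ (i = 1 ∧ j = 3) ∨ (i = 2 ∧ j = 4)

/-- knowledge relations. -/
def rK (g : Bool) (i j : Fin 5) : Prop := (g = true ∧ rka i j) ∨ (g = false ∧ rkb i j)

/-- belief/intention relations. -/
def rB (g : Bool) (i j : Fin 5) : Prop := (g = true ∧ rba i j) ∨ (g = false ∧ rkb i j)

instance (i j : Fin 5) : Decidable (rka i j) := by unfold rka; infer_instance
instance (i j : Fin 5) : Decidable (rba i j) := by unfold rba; infer_instance
instance (i j : Fin 5) : Decidable (rkb i j) := by unfold rkb; infer_instance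
instance (g : Bool) (i j : Fin 5) : Decidable (rK g i j) := by unfold rK; infer_instance
instance (g : Bool) (i j : Fin 5) : Decidable (rB g i j) := by unfold rB; infer_instance

def myModel : SModel Bool (Fin 5) where
  RI := rB
  RK := rK
  RB := rB
  RB_serial := by decide
  RI_serial := by decide
  RI_trans := by decide
  RK_refl := by decide
  RK_trans := by decide
  RK_RI := by decide
  RB_sub_RK := by decide
  RK_RB := by decide
  RI_RK := by decide

theorem secrecy_nonmonotonic_over_conjunction :
    ∃ (Ag W : Type) (M : SModel Ag W) (a b : Ag), a ≠ b ∧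
      ∃ (i : W) (P Q : W → Prop),
        M.Sec a b (fun w => P w ∧ Q w) i ∧ ¬ M.Sec a b P i ∧ ¬ M.Sec a b Q i := by
  refine ⟨Bool, Fin 5, myModel, true, false, by decide,
    0, fun w => w ≠ 4, fun w => w ≠ 3, ?_, ?_, ?_⟩ <;>
    simp only [SModel.Sec, SModel.Kop, SModel.Bop, SModel.Iop, myModel] <;> decide
end

section
/- Secrecy and disjunction: for every S-model, all agents a ≠ b, all truth sets P, Q : W → Prop, and every world i: (1) if (S_{a,b} (fun w => P w ∨ Q w)) i, (K_a P) i, and (I_a P) i, then (S_{a,b} P) i; and (2) if (S_{a,b} (fun w => P w ∨ Q w)) i and (S_{a,b} (fun w => ¬ P w)) i, then (S_{a,b} Q) i. -/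
theorem secrecy_and_disjunction {Ag W : Type} (M : SModel Ag W)
    (a b : Ag) (hab : a ≠ b) (P Q : W → Prop) (i : W) :
    (M.Sec a b (fun w => P w ∨ Q w) i → M.Kop a P i → M.Iop a P i → M.Sec a b P i) ∧
      (M.Sec a b (fun w => P w ∨ Q w) i → M.Sec a b (fun w => ¬ P w) i →
        M.Sec a b Q i) := by
  constructor
  · rintro ⟨_, hB, hI⟩ hK hIP
    refine ⟨hK, fun j hj => ?_, fun j hj => ?_⟩
    · intro hKbP
      exact hB j hj (fun w hw => Or.inl (hKbP w hw))
    · refine ⟨hIP j hj, ?_⟩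
      intro hKbP
      exact (hI j hj).2 (fun w hw => Or.inl (hKbP w hw))
  · rintro ⟨hK1, hB1, hI1⟩ ⟨hK2, hB2, hI2⟩
    refine ⟨fun j hj => (hK1 j hj).resolve_left (hK2 j hj), fun j hj => ?_,
      fun j hj => ?_⟩
    · intro hKbQ
      exact hB1 j hj (fun w hw => Or.inr (hKbQ w hw))
    · refine ⟨((hI1 j hj).1).resolve_left (hI2 j hj).1, ?_⟩
      intro hKbQ
      exact (hI1 j hj).2 (fun w hw => Or.inr (hKbQ w hw))
end

section
/- Awareness of secrecy violation through indirect information flows: for every S-model, all agents a ≠ b, all truth sets P, Q : W → Prop, and every world i, if (K_a (fun w => (K_b P) w ∧ (K_b (fun v => P v → Q v)) w)) i, then (K_a (fun w => ¬ (S_{a,b} Q) w)) i. -/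
theorem awareness_of_secrecy_violation {Ag W : Type} (M : SModel Ag W)
    (a b : Ag) (hab : a ≠ b) (P Q : W → Prop) (i : W)
    (h : M.Kop a (fun w => M.Kop b P w ∧ M.Kop b (fun v => P v → Q v) w) i) :
    M.Kop a (fun w => ¬ M.Sec a b Q w) i := by
  intro j hij hS
  obtain ⟨w, hbw⟩ := M.RB_serial a j
  have hnK : ¬ M.Kop b Q w := hS.2.1 w hbw
  have hiw : M.RK a i w := M.RK_trans a hij (M.RB_sub_RK a hbw)
  obtain ⟨h1, h2⟩ := h w hiw
  exact hnK (fun k hk => h2 k hk (h1 k hk))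
end

section
/- Risk-mitigation dichotomy: for every S-model, all agents a ≠ b, all truth sets P, Q : W → Prop, and every world i, if (S_{a,b} Q) i, (B_a (K_b (fun w => P w → Q w))) i, and (K_a P) i, then: if (S_{a,b} P) i fails, then either (I_a P) i fails or (I_a (K_b (fun w => P w → Q w))) i fails. -/
theorem risk_mitigation_dichotomy {Ag W : Type} (M : SModel Ag W)
    (a b : Ag) (hab : a ≠ b) (P Q : W → Prop) (i : W)
    (h1 : M.Sec a b Q i) (h2 : M.Bop a (M.Kop b (fun w => P w → Q w)) i)
    (h3 : M.Kop a P i) :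
    ¬ M.Sec a b P i →
      ¬ M.Iop a P i ∨ ¬ M.Iop a (M.Kop b (fun w => P w → Q w)) i := by
  intro hnS
  by_contra hcon
  push_neg at hcon
  obtain ⟨hIP, hIK⟩ := hcon
  apply hnS
  refine ⟨h3, ?_, ?_⟩
  · intro j hj
    intro hKbP
    exact h1.2.1 j hj (fun w hw => hKbP w hw |> (h2 j hj w hw))
  · intro j hj
    refine ⟨hIP j hj, ?_⟩
    intro hKbP
    exact (h1.2.2 j hj).2 (fun w hw => (hIK j hj) w hw (hKbP w hw))
end
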